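/- Let ω = e^{2πi/3}, let g₁ = diag(1,ω,ω²) and let g₂ be the cyclic permutation matrix in GL(3,ℂ), generating the Heisenberg group Γ of order 27. If n ∈ GL(3,ℂ) satisfies n g₁ n⁻¹ = ω^k g₁ and n g₂ n⁻¹ = ω^l g₂ for some integers k, l, then n = z·g for some nonzero scalar z ∈ ℂ* and some g ∈ Γ; indeed one may take g = g₁^l g₂^{−k}. In other words, the kernel of the conjugation homomorphism χ: N → GL(2,ℤ/3) is exactly D·Γ, where D is the group of nonzero scalar matrices. -/

import Mathlib

noncomputable section
open Complex Matrix

/-- ω = e^{2πi/3}, a primitive cube root of unity. -/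
def ω : ℂ := Complex.exp (2 * Real.pi * Complex.I / 3)

lemma ω_ne_zero : ω ≠ 0 := Complex.exp_ne_zero _

/-- g₁ = diag(1, ω, ω²). -/
def g₁ : Matrix (Fin 3) (Fin 3) ℂ := Matrix.diagonal ![1, ω, ω ^ 2]

/-- g₂ : the cyclic permutation matrix, sending e₁ ↦ e₂ ↦ e₃ ↦ e₁. -/
def g₂ : Matrix (Fin 3) (Fin 3) ℂ := Matrix.of ![![0,0,1],![1,0,0],![0,1,0]]

lemma det_g₁ : g₁.det ≠ 0 := by
  rw [g₁, Matrix.det_diagonal, Fin.prod_univ_three]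
  simp only [Matrix.cons_val_zero, Matrix.cons_val_one, Matrix.head_cons,
    Matrix.cons_val_two, Matrix.tail_cons]
  exact by simpa using mul_ne_zero (mul_ne_zero one_ne_zero ω_ne_zero) (pow_ne_zero 2 ω_ne_zero)

lemma det_g₂ : g₂.det ≠ 0 := by
  rw [g₂, Matrix.det_fin_three]
  norm_num
  first
    | exact ⟨one_ne_zero, one_ne_zero⟩
    | simp [Matrix.vecCons, Fin.cons, Fin.cases, Fin.induction]

/-- g₁ as an element of GL(3,ℂ). -/
def G₁ : GL (Fin 3) ℂ := Matrix.GeneralLinearGroup.mkOfDetNeZero g₁ det_g₁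

/-- g₂ as an element of GL(3,ℂ). -/
def G₂ : GL (Fin 3) ℂ := Matrix.GeneralLinearGroup.mkOfDetNeZero g₂ det_g₂

/-- Γ = Δ₂₇ ⊆ GL(3,ℂ), the subgroup generated by g₁ and g₂. -/
def Γ : Subgroup (GL (Fin 3) ℂ) := Subgroup.closure {G₁, G₂}

/-! The scalar `ωScalar = ω • 1` is central in `GL(3, ℂ)` and `g₁ g₂ = ωScalar g₂ g₁`. Hence
`M = g₁ ^ l * g₂ ^ (-k)` conjugates `g₁` to `ω ^ k • g₁` and `g₂` to `ω ^ l • g₂`, just as `n` does,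
so `M⁻¹ n` commutes with `g₁` and `g₂`. Commuting with `g₁`, whose eigenvalues `1, ω, ω²` are
distinct, forces a diagonal matrix, and commuting with the cyclic permutation `g₂` then forces a
scalar one. -/

section SemiconjBy

variable {G : Type*} [Group G] {a b c x y : G}

theorem SemiconjBy.swap_of_mul (h : SemiconjBy a b (c * b)) : SemiconjBy b a (c⁻¹ * a) := by
  unfold SemiconjBy at h ⊢
  rw [mul_assoc, h, mul_assoc, inv_mul_cancel_left]

theorem SemiconjBy.zpow_left_of_mem_center (hc : c ∈ Subgroup.center G)
    (h : SemiconjBy a b (c * b)) (m : ℤ) : SemiconjBy (a ^ m) b (c ^ m * b) := by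
  have hca : Commute c⁻¹ a := (Subgroup.mem_center_iff.mp (inv_mem hc) a).symm
  have h' := h.swap_of_mul.zpow_right m
  rw [hca.mul_zpow] at h'
  simpa only [_root_.inv_zpow, inv_inv] using h'.swap_of_mul

theorem SemiconjBy.commute_inv_mul (hx : SemiconjBy x a b) (hy : SemiconjBy y a b) :
    Commute (x⁻¹ * y) a :=
  (SemiconjBy.inv_symm_left_iff.mpr hx).mul_left hy

end SemiconjBy

theorem Matrix.IsDiag.of_commute_diagonal {n R : Type*} [Fintype n] [DecidableEq n] [CommRing R]
    [NoZeroDivisors R] {d : n → R} (hd : Function.Injective d) {A : Matrix n n R}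
    (h : Commute A (diagonal d)) : A.IsDiag := by
  intro i j hij
  have hij' := congr_fun (congr_fun h.eq i) j
  rw [mul_diagonal, diagonal_mul] at hij'
  have : A i j * (d j - d i) = 0 := by linear_combination hij'
  exact (mul_eq_zero.mp this).resolve_right (sub_ne_zero.mpr (hd.ne (Ne.symm hij)))

lemma isPrimitiveRoot_ω : IsPrimitiveRoot ω 3 := by
  simpa [ω] using Complex.isPrimitiveRoot_exp 3 (by norm_num)

lemma injective_diag_g₁ : Function.Injective ![1, ω, ω ^ 2] := by
  have hpow : ![1, ω, ω ^ 2] = fun i : Fin 3 => ω ^ (i : ℕ) := by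
    ext i; fin_cases i <;> simp
  rw [hpow]
  intro i j hij
  exact Fin.ext (isPrimitiveRoot_ω.pow_inj i.isLt j.isLt hij)

lemma g₁_mul_g₂ : g₁ * g₂ = ω • (g₂ * g₁) := by
  have hω : ω * ω ^ 2 = 1 := by rw [← pow_succ', isPrimitiveRoot_ω.pow_eq_one]
  ext i j
  rw [Matrix.smul_apply, g₁, diagonal_mul, mul_diagonal]
  fin_cases i <;> fin_cases j <;> simp [g₂, hω, ← sq]

lemma eq_smul_one_of_commute_g₁_of_commute_g₂ {A : Matrix (Fin 3) (Fin 3) ℂ}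
    (h₁ : Commute A g₁) (h₂ : Commute A g₂) : A = A 0 0 • 1 := by
  have hdiag : A.IsDiag := IsDiag.of_commute_diagonal injective_diag_g₁ h₁
  have h10 : A 1 1 = A 0 0 := by
    simpa [g₂, mul_apply, Fin.sum_univ_three] using congr_fun (congr_fun h₂.eq 1) 0
  have h21 : A 2 2 = A 1 1 := by
    simpa [g₂, mul_apply, Fin.sum_univ_three] using congr_fun (congr_fun h₂.eq 2) 1
  ext i j
  fin_cases i <;> fin_cases j <;> simp [hdiag _, h10, h21]

def ωScalar : GL (Fin 3) ℂ := GeneralLinearGroup.scalar (Fin 3) (Units.mk0 ω ω_ne_zero)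

lemma ωScalar_mem_center : ωScalar ∈ Subgroup.center (GL (Fin 3) ℂ) := by
  rw [GeneralLinearGroup.center_eq_range_scalar]
  exact ⟨_, rfl⟩

lemma coe_ωScalar_zpow_mul (k : ℤ) (x : GL (Fin 3) ℂ) :
    ((ωScalar ^ k * x : GL (Fin 3) ℂ) : Matrix (Fin 3) (Fin 3) ℂ) = ω ^ k • (x : Matrix _ _ ℂ) := by
  rw [Units.val_mul, ωScalar, ← map_zpow, GeneralLinearGroup.coe_scalar,
    Units.val_zpow_eq_zpow_val, Units.val_mk0, scalar_apply, smul_eq_diagonal_mul]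

lemma semiconjBy_of_coe_conj_eq {x a : GL (Fin 3) ℂ} {k : ℤ}
    (h : ((x * a * x⁻¹ : GL (Fin 3) ℂ) : Matrix (Fin 3) (Fin 3) ℂ) = ω ^ k • (a : Matrix _ _ ℂ)) :
    SemiconjBy x a (ωScalar ^ k * a) :=
  mul_inv_eq_iff_eq_mul.mp (Units.ext (h.trans (coe_ωScalar_zpow_mul k a).symm))

lemma semiconjBy_G₁_G₂ : SemiconjBy G₁ G₂ (ωScalar * G₂) := by
  refine Units.ext ?_
  rw [Units.val_mul, mul_assoc, ← zpow_one ωScalar, coe_ωScalar_zpow_mul, zpow_one,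
    Units.val_mul]
  exact g₁_mul_g₂

lemma semiconjBy_zpow_mul_zpow_G₁ (k l : ℤ) :
    SemiconjBy (G₁ ^ l * G₂ ^ (-k)) G₁ (ωScalar ^ k * G₁) := by
  have h₂ : SemiconjBy (G₂ ^ (-k)) G₁ (ωScalar ^ k * G₁) := by
    simpa only [_root_.inv_zpow', neg_neg] using
      semiconjBy_G₁_G₂.swap_of_mul.zpow_left_of_mem_center (inv_mem ωScalar_mem_center) (-k)
  have h₁ : Commute (G₁ ^ l) (ωScalar ^ k * G₁) :=
    Commute.mul_right (Subgroup.mem_center_iff.mp (zpow_mem ωScalar_mem_center k) _)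
      ((Commute.refl G₁).zpow_left l)
  exact SemiconjBy.mul_left h₁ h₂

lemma semiconjBy_zpow_mul_zpow_G₂ (k l : ℤ) :
    SemiconjBy (G₁ ^ l * G₂ ^ (-k)) G₂ (ωScalar ^ l * G₂) :=
  (semiconjBy_G₁_G₂.zpow_left_of_mem_center ωScalar_mem_center l).mul_left
    ((Commute.refl G₂).zpow_left (-k))

lemma exists_coe_eq_smul_one_of_commute {x : GL (Fin 3) ℂ} (h₁ : Commute x G₁)
    (h₂ : Commute x G₂) : ∃ z : ℂ, z ≠ 0 ∧ (x : Matrix (Fin 3) (Fin 3) ℂ) = z • 1 := by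
  have hx := eq_smul_one_of_commute_g₁_of_commute_g₂ h₁.units_val h₂.units_val
  refine ⟨_, fun hz => x.ne_zero ?_, hx⟩
  rw [hx, hz, zero_smul]

lemma zpow_mul_zpow_mem_Γ (k l : ℤ) : G₁ ^ l * G₂ ^ (-k) ∈ Γ :=
  mul_mem (zpow_mem (Subgroup.subset_closure (by simp)) l)
    (zpow_mem (Subgroup.subset_closure (by simp)) (-k))

/-- The kernel of χ is D·Γ: if n g₁ n⁻¹ = ω^k g₁ and n g₂ n⁻¹ = ω^l g₂ then
n = z·g for a nonzero scalar z and g ∈ Γ; indeed one may take g = g₁^l g₂^{−k}. -/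
theorem chi_kernel :
    ∀ (n : GL (Fin 3) ℂ) (k l : ℤ),
      ((n * G₁ * n⁻¹ : GL (Fin 3) ℂ) : Matrix (Fin 3) (Fin 3) ℂ) =
        ω ^ k • ((G₁ : GL (Fin 3) ℂ) : Matrix (Fin 3) (Fin 3) ℂ) →
      ((n * G₂ * n⁻¹ : GL (Fin 3) ℂ) : Matrix (Fin 3) (Fin 3) ℂ) =
        ω ^ l • ((G₂ : GL (Fin 3) ℂ) : Matrix (Fin 3) (Fin 3) ℂ) →
      ∃ z : ℂ, z ≠ 0 ∧ (G₁ ^ l * G₂ ^ (-k) : GL (Fin 3) ℂ) ∈ Γ ∧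
        ((n : GL (Fin 3) ℂ) : Matrix (Fin 3) (Fin 3) ℂ) =
          z • ((G₁ ^ l * G₂ ^ (-k) : GL (Fin 3) ℂ) : Matrix (Fin 3) (Fin 3) ℂ) := by
  intro n k l h₁ h₂
  set M : GL (Fin 3) ℂ := G₁ ^ l * G₂ ^ (-k)
  have hc₁ : Commute (M⁻¹ * n) G₁ :=
    (semiconjBy_zpow_mul_zpow_G₁ k l).commute_inv_mul (semiconjBy_of_coe_conj_eq h₁)
  have hc₂ : Commute (M⁻¹ * n) G₂ :=
    (semiconjBy_zpow_mul_zpow_G₂ k l).commute_inv_mul (semiconjBy_of_coe_conj_eq h₂)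
  obtain ⟨z, hz, hscalar⟩ := exists_coe_eq_smul_one_of_commute hc₁ hc₂
  refine ⟨z, hz, zpow_mul_zpow_mem_Γ k l, ?_⟩
  calc (n : Matrix (Fin 3) (Fin 3) ℂ) = ((M * (M⁻¹ * n) : GL (Fin 3) ℂ) : Matrix _ _ ℂ) := by
        rw [mul_inv_cancel_left]
    _ = z • (M : Matrix (Fin 3) (Fin 3) ℂ) := by
        rw [Units.val_mul, hscalar, Matrix.mul_smul, mul_one]
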